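/- For Rule 28 (and similarly Rule 29) on a ring of size n, any configuration containing the word 01001 as a factor (cyclically) never reaches a fixed point under any sequential update mode: the single 0 between the two walls 01 alternates forever. -/

import Mathlib

/-- Single-cell update: replace the state of cell `i` by the local rule applied
to its neighborhood on the ring `ZMod n`. -/
def eupdate (n : ℕ) (f : Bool → Bool → Bool → Bool) (x : ZMod n → Bool) (i : ZMod n) :
    ZMod n → Bool :=
  Function.update x i (f (x (i - 1)) (x i) (x (i + 1)))

/-- Synchronous (parallel) step. -/
def parStep (n : ℕ) (f : Bool → Bool → Bool → Bool) (x : ZMod n → Bool) : ZMod n → Bool :=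
  fun i => f (x (i - 1)) (x i) (x (i + 1))

/-- `x` is a fixed point of the parallel dynamics. -/
def IsFixedConfig (n : ℕ) (f : Bool → Bool → Bool → Bool) (x : ZMod n → Bool) : Prop :=
  ∀ i : ZMod n, f (x (i - 1)) (x i) (x (i + 1)) = x i

/-- One full sequential step under the sequential update mode `μ`
(a permutation of the cells): update cells one at a time in the order
`μ 0, μ 1, …, μ (n-1)`. -/
def seqStep (n : ℕ) (f : Bool → Bool → Bool → Bool) (μ : Fin n ≃ ZMod n)
    (x : ZMod n → Bool) : ZMod n → Bool :=
  (List.finRange n).foldl (fun y k => eupdate n f y (μ k)) x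

/-- One full sequential step under the descending order `(n-1, n-2, …, 0)`. -/
def seqStepDesc (n : ℕ) (f : Bool → Bool → Bool → Bool) (x : ZMod n → Bool) : ZMod n → Bool :=
  ((List.range n).reverse).foldl (fun y k => eupdate n f y (k : ZMod n)) x

/-- One full sequential step under the ascending order `(0, 1, …, n-1)`. -/
def seqStepAsc (n : ℕ) (f : Bool → Bool → Bool → Bool) (x : ZMod n → Bool) : ZMod n → Bool :=
  (List.range n).foldl (fun y k => eupdate n f y (k : ZMod n)) x

def rule28 : Bool → Bool → Bool → Bool
  | true, true, true => false
  | true, true, false => false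
  | true, false, true => false
  | true, false, false => true
  | false, true, true => true
  | false, true, false => true
  | false, false, true => false
  | false, false, false => false

def rule29 : Bool → Bool → Bool → Bool
  | true, true, true => false
  | true, true, false => false
  | true, false, true => false
  | true, false, false => true
  | false, true, true => true
  | false, true, false => true
  | false, false, true => false
  | false, false, false => true

/-!
A wall `01` is never destroyed by an update: under both rules a `0` whose right neighbour is `1`
stays `0`, and a `1` whose left neighbour is `0` stays `1`. So the walls of `01001` at `i` and
`i + 3` survive every sequential step, and the cell `i + 2` between them always sees the
neighbourhood `1 ? 0`, which both rules send to the negation of the middle cell.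
-/

def HasWallAt {n : ℕ} (y : ZMod n → Bool) (j : ZMod n) : Prop :=
  y j = false ∧ y (j + 1) = true

theorem not_isFixedConfig_of_hasWallAt {n : ℕ} {f : Bool → Bool → Bool → Bool}
    (hf : ∀ b, f true b false ≠ b) {y : ZMod n → Bool} {j : ZMod n}
    (hj : HasWallAt y j) (hj₃ : HasWallAt y (j + 3)) : ¬ IsFixedConfig n f y := by
  intro hfix
  have hmid := hfix (j + 2)
  rw [show j + 2 - 1 = j + 1 by ring, show j + 2 + 1 = j + 3 by ring, hj.2, hj₃.1] at hmid
  exact hf _ hmid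

section WallPreserving

variable {n : ℕ} {f : Bool → Bool → Bool → Bool}
  (hf₀ : ∀ a, f a false true = false) (hf₁ : ∀ c, f false true c = true)
include hf₀ hf₁

theorem hasWallAt_eupdate {y : ZMod n → Bool} {j : ZMod n} (hy : HasWallAt y j) (k : ZMod n) :
    HasWallAt (eupdate n f y k) j := by
  obtain ⟨h0, h1⟩ := hy
  constructor
  · by_cases hk : j = k
    · subst hk; simp [eupdate, h0, h1, hf₀]
    · simp [eupdate, Function.update_of_ne hk, h0]
  · by_cases hk : j + 1 = k
    · subst hk; simp [eupdate, h0, h1, hf₁]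
    · simp [eupdate, Function.update_of_ne hk, h1]

theorem hasWallAt_seqStep {y : ZMod n → Bool} {j : ZMod n} (hy : HasWallAt y j)
    (μ : Fin n ≃ ZMod n) : HasWallAt (seqStep n f μ y) j := by
  suffices ∀ (l : List (Fin n)) (y : ZMod n → Bool), HasWallAt y j →
      HasWallAt (l.foldl (fun y k => eupdate n f y (μ k)) y) j from this _ y hy
  intro l
  induction l with
  | nil => exact fun _ hy => hy
  | cons k l ih => exact fun y hy => ih _ (hasWallAt_eupdate hf₀ hf₁ hy (μ k))

theorem hasWallAt_iterate_seqStep {y : ZMod n → Bool} {j : ZMod n} (hy : HasWallAt y j)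
    (μ : Fin n ≃ ZMod n) (t : ℕ) : HasWallAt ((seqStep n f μ)^[t] y) j :=
  Function.Iterate.rec (HasWallAt · j) hy (fun _ h => hasWallAt_seqStep hf₀ hf₁ h μ) t

theorem not_isFixedConfig_iterate_seqStep (hf : ∀ b, f true b false ≠ b)
    {y : ZMod n → Bool} {j : ZMod n} (hj : HasWallAt y j) (hj₃ : HasWallAt y (j + 3))
    (μ : Fin n ≃ ZMod n) (t : ℕ) : ¬ IsFixedConfig n f ((seqStep n f μ)^[t] y) :=
  not_isFixedConfig_of_hasWallAt hf (hasWallAt_iterate_seqStep hf₀ hf₁ hj μ t)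
    (hasWallAt_iterate_seqStep hf₀ hf₁ hj₃ μ t)

end WallPreserving

theorem rule28_29_01001_never_fixed_general (n : ℕ) (x : ZMod n → Bool)
    (i : ZMod n)
    (hx : x i = false ∧ x (i + 1) = true ∧ x (i + 2) = false ∧
          x (i + 3) = false ∧ x (i + 4) = true)
    (μ : Fin n ≃ ZMod n) :
    ∀ t : ℕ,
      ¬ IsFixedConfig n rule28 ((seqStep n rule28 μ)^[t] x) ∧
      ¬ IsFixedConfig n rule29 ((seqStep n rule29 μ)^[t] x) := by
  obtain ⟨h0, h1, -, h3, h4⟩ := hx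
  have hw : HasWallAt x i := ⟨h0, h1⟩
  have hw₃ : HasWallAt x (i + 3) := ⟨h3, by convert h4 using 2; ring⟩
  intro t
  exact ⟨not_isFixedConfig_iterate_seqStep (by decide) (by decide) (by decide) hw hw₃ μ t,
    not_isFixedConfig_iterate_seqStep (by decide) (by decide) (by decide) hw hw₃ μ t⟩

theorem rule28_29_01001_never_fixed (n : ℕ) (hn : 0 < n) (x : ZMod n → Bool)
    (i : ZMod n)
    (hx : x i = false ∧ x (i + 1) = true ∧ x (i + 2) = false ∧
          x (i + 3) = false ∧ x (i + 4) = true)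
    (μ : Fin n ≃ ZMod n) :
    ∀ t : ℕ,
      ¬ IsFixedConfig n rule28 ((seqStep n rule28 μ)^[t] x) ∧
      ¬ IsFixedConfig n rule29 ((seqStep n rule29 μ)^[t] x) :=
  rule28_29_01001_never_fixed_general n x i hx μ
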